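/- arXiv:2310.02012 — 5 statements merged into one kernel-verified Lean document; each statement's English description precedes it below -/
import Mathlib

section
/- Let X ∈ ℝ^{d×d} be nonsingular, let W ∈ ℝ^{d×d} be an orthogonal matrix, and set X' = WX. Then I(BN(X')) ≥ (1 + V/M²)·I(X), where V is the (population) variance of the d row norms {‖X'_{j·}‖}_{j=1}^d of X' and M is their mean. -/
open MeasureTheory Matrix

/-- Euclidean norm of the `i`-th row of a square real matrix. -/
noncomputable def rowNorm {d : ℕ} (X : Matrix (Fin d) (Fin d) ℝ) (i : Fin d) : ℝ :=
  Real.sqrt (∑ j, X i j ^ 2)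

/-- Batch normalization (without mean reduction): each row is rescaled to unit norm. -/
noncomputable def BN {d : ℕ} (X : Matrix (Fin d) (Fin d) ℝ) : Matrix (Fin d) (Fin d) ℝ :=
  Matrix.of fun i j => X i j / rowNorm X i

/-- Isometry gap `φ(X) = -log( det(XᵀX)^{1/d} / ((1/d) Tr(XᵀX)) )`. -/
noncomputable def isoGap {d : ℕ} (X : Matrix (Fin d) (Fin d) ℝ) : ℝ :=
  - Real.log ((Xᵀ * X).det ^ ((1 : ℝ) / d) / ((1 / d : ℝ) * (Xᵀ * X).trace))

/-- Isometry `I(X) = exp(-φ(X))`. -/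
noncomputable def isoI {d : ℕ} (X : Matrix (Fin d) (Fin d) ℝ) : ℝ :=
  Real.exp (- isoGap X)

/-!
Both isometries have the same numerator `det(XᵀX)^{1/d}`: an orthogonal `W` does not change
`XᵀX`, and normalizing the rows divides the determinant by the product `∏ rⱼ` of the row norms
`rⱼ` of `X' = W X` while making the trace equal to `d`. Hence
`I(BN X') = det(XᵀX)^{1/d} / (∏ rⱼ)^{2/d}` and `I(X) = det(XᵀX)^{1/d} / mean(rⱼ²)`.
Since `1 + V/M² = mean(rⱼ²)/M²`, the claim becomes `(∏ rⱼ)^{2/d} ≤ M²`, which is AM-GM.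
-/

open Finset

lemma Real.prod_rpow_one_div_card_le_mean {ι : Type*} [Fintype ι] [Nonempty ι] {z : ι → ℝ}
    (hz : ∀ i, 0 ≤ z i) :
    (∏ i, z i) ^ ((1 : ℝ) / Fintype.card ι) ≤ (1 / Fintype.card ι : ℝ) * ∑ i, z i := by
  have hcard : (0 : ℝ) < Fintype.card ι := Nat.cast_pos.2 Fintype.card_pos
  have h := Real.geom_mean_le_arith_mean univ (fun _ => 1) z (fun _ _ => zero_le_one)
    (by simpa using hcard) (fun i _ => hz i)
  simp only [Real.rpow_one, one_mul, sum_const, card_univ, nsmul_eq_mul, mul_one] at h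
  rwa [one_div, inv_mul_eq_div]

section

variable {d : ℕ}

lemma rowNorm_sq (A : Matrix (Fin d) (Fin d) ℝ) (i : Fin d) :
    rowNorm A i ^ 2 = ∑ j, A i j ^ 2 :=
  Real.sq_sqrt (sum_nonneg fun j _ => sq_nonneg (A i j))

lemma rowNorm_pos_of_det_ne_zero {A : Matrix (Fin d) (Fin d) ℝ} (hA : A.det ≠ 0) (i : Fin d) :
    0 < rowNorm A i := by
  refine Real.sqrt_pos.2 ((sum_nonneg fun j _ => sq_nonneg _).lt_of_ne' fun h => hA ?_)
  refine det_eq_zero_of_row_eq_zero i fun j => pow_eq_zero_iff two_ne_zero |>.1 ?_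
  exact congrFun ((Fintype.sum_eq_zero_iff_of_nonneg fun j => sq_nonneg (A i j)).1 h) j

lemma trace_transpose_mul_self (A : Matrix (Fin d) (Fin d) ℝ) :
    (Aᵀ * A).trace = ∑ i, rowNorm A i ^ 2 := by
  simp only [rowNorm_sq, trace, Matrix.diag, mul_apply, transpose_apply, ← sq]
  exact sum_comm

lemma det_transpose_mul_self (A : Matrix (Fin d) (Fin d) ℝ) : (Aᵀ * A).det = A.det ^ 2 := by
  rw [det_mul, det_transpose, sq]

lemma BN_eq_diagonal_mul (A : Matrix (Fin d) (Fin d) ℝ) :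
    BN A = diagonal (fun i => (rowNorm A i)⁻¹) * A := by
  ext i j
  simp [BN, diagonal_mul, div_eq_inv_mul]

lemma det_BN (A : Matrix (Fin d) (Fin d) ℝ) : (BN A).det = A.det / ∏ i, rowNorm A i := by
  rw [BN_eq_diagonal_mul, det_mul, det_diagonal, prod_inv_distrib, inv_mul_eq_div]

lemma rowNorm_BN {A : Matrix (Fin d) (Fin d) ℝ} (hA : ∀ i, rowNorm A i ≠ 0) (i : Fin d) :
    rowNorm (BN A) i = 1 := by
  have h : ∑ j, BN A i j ^ 2 = 1 := by
    simp only [BN, of_apply, div_pow, ← sum_div, ← rowNorm_sq]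
    exact div_self (pow_ne_zero 2 (hA i))
  rw [rowNorm, h, Real.sqrt_one]

lemma isoI_congr {A B : Matrix (Fin d) (Fin d) ℝ} (h : Aᵀ * A = Bᵀ * B) : isoI A = isoI B := by
  rw [isoI, isoGap, h, ← isoGap, ← isoI]

lemma isoI_eq_of_det_ne_zero (hd : 0 < d) {A : Matrix (Fin d) (Fin d) ℝ} (hA : A.det ≠ 0) :
    isoI A = (A.det ^ 2) ^ ((1 : ℝ) / d) / ((1 / d : ℝ) * ∑ i, rowNorm A i ^ 2) := by
  have : Nonempty (Fin d) := ⟨⟨0, hd⟩⟩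
  have hmean : 0 < (1 / d : ℝ) * ∑ i, rowNorm A i ^ 2 := mul_pos (by positivity)
    (sum_pos (fun i _ => pow_pos (rowNorm_pos_of_det_ne_zero hA i) 2) univ_nonempty)
  rw [isoI, isoGap, neg_neg, det_transpose_mul_self, trace_transpose_mul_self,
    Real.exp_log (by positivity)]

lemma isoI_BN_eq_of_det_ne_zero (hd : 0 < d) {A : Matrix (Fin d) (Fin d) ℝ} (hA : A.det ≠ 0) :
    isoI (BN A) = (A.det ^ 2) ^ ((1 : ℝ) / d) / ((∏ i, rowNorm A i) ^ 2) ^ ((1 : ℝ) / d) := by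
  have hr i := (rowNorm_pos_of_det_ne_zero hA i).ne'
  have hBN : (BN A).det ≠ 0 := by
    rw [det_BN]
    exact div_ne_zero hA (prod_ne_zero_iff.2 fun i _ => hr i)
  have hd' : (d : ℝ) ≠ 0 := Nat.cast_ne_zero.2 hd.ne'
  rw [isoI_eq_of_det_ne_zero hd hBN, det_BN, div_pow,
    Real.div_rpow (sq_nonneg _) (sq_nonneg _)]
  simp [rowNorm_BN hr, hd']

theorem isoI_BN_ge (hd : 0 < d) {A : Matrix (Fin d) (Fin d) ℝ} (hA : A.det ≠ 0) :
    isoI (BN A) ≥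
      (1 + ((1 / d : ℝ) * ∑ j, rowNorm A j ^ 2 - ((1 / d : ℝ) * ∑ j, rowNorm A j) ^ 2) /
        ((1 / d : ℝ) * ∑ j, rowNorm A j) ^ 2) * isoI A := by
  have : Nonempty (Fin d) := ⟨⟨0, hd⟩⟩
  have hr := rowNorm_pos_of_det_ne_zero hA
  set M := (1 / d : ℝ) * ∑ j, rowNorm A j
  set Q := (1 / d : ℝ) * ∑ j, rowNorm A j ^ 2
  set G := (A.det ^ 2) ^ ((1 : ℝ) / d)
  have hM : 0 < M := mul_pos (by positivity) (sum_pos (fun i _ => hr i) univ_nonempty)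
  have hQ : 0 < Q := mul_pos (by positivity) (sum_pos (fun i _ => pow_pos (hr i) 2) univ_nonempty)
  have hP : 0 < ∏ i, rowNorm A i := prod_pos fun i _ => hr i
  have amgm : ((∏ i, rowNorm A i) ^ 2) ^ ((1 : ℝ) / d) ≤ M ^ 2 := by
    have h := Real.prod_rpow_one_div_card_le_mean fun i => (hr i).le
    rw [Fintype.card_fin] at h
    rw [← Real.rpow_natCast, ← Real.rpow_mul hP.le, mul_comm, Real.rpow_mul hP.le,
      Real.rpow_natCast]
    gcongr
  rw [isoI_BN_eq_of_det_ne_zero hd hA, isoI_eq_of_det_ne_zero hd hA, ge_iff_le]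
  calc (1 + (Q - M ^ 2) / M ^ 2) * (G / Q) = G / M ^ 2 := by field_simp; ring
    _ ≤ G / ((∏ i, rowNorm A i) ^ 2) ^ ((1 : ℝ) / d) :=
      div_le_div_of_nonneg_left (by positivity) (by positivity) amgm

end

/-- for nonsingular `X` and orthogonal `W`, with `X' = W X`,
`I(BN(X')) ≥ (1 + variance/mean²) · I(X)` where variance and mean are taken over
the row norms of `X'`. -/
theorem isoI_BN_rotation_ge {d : ℕ} (hd : 0 < d)
    (X W : Matrix (Fin d) (Fin d) ℝ) (hX : X.det ≠ 0) (hW : Wᵀ * W = 1) :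
    isoI (BN (W * X)) ≥
      (1 + ((1 / d : ℝ) * ∑ j, rowNorm (W * X) j ^ 2 -
              ((1 / d : ℝ) * ∑ j, rowNorm (W * X) j) ^ 2) /
            ((1 / d : ℝ) * ∑ j, rowNorm (W * X) j) ^ 2) * isoI X := by
  have hgram : (W * X)ᵀ * (W * X) = Xᵀ * X := by
    rw [transpose_mul, Matrix.mul_assoc, ← Matrix.mul_assoc Wᵀ, hW, Matrix.one_mul]
  have hdet : (W * X).det ≠ 0 := by
    have h := congrArg det hgram
    rw [det_transpose_mul_self, det_transpose_mul_self] at h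
    exact pow_ne_zero_iff two_ne_zero |>.1 (h ▸ pow_ne_zero 2 hX)
  rw [← isoI_congr hgram]
  exact isoI_BN_ge hd hdet
end

section
/- Let X ∈ ℝ^{d×d} be nonsingular with Tr(XXᵀ) = d, and let J_BN(X) denote the Fréchet derivative of the map BN at X, regarded as a linear operator on ℝ^{d×d} with operator norm ‖·‖_op taken with respect to the Frobenius norm. Then log ‖J_BN(X)‖_op ≤ d·φ(X) + 1. Moreover, if φ(X) ≤ 1/(16d), then log ‖J_BN(X)‖_op ≤ 2·√(d·φ(X)). -/
/-!
Write `s i` for the squared norm of the `i`-th row of `X`; then `∑ i, s i = Tr(XXᵀ) = d` and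
`d φ(X) = -log det(X)²`. Hadamard's inequality `det(X)² ≤ ∏ i, s i` therefore gives
`∑ i, (s i - 1 - log (s i)) ≤ d φ(X)`, a sum of nonnegative terms, so the smallest row norm `a`
satisfies `a² - 1 - log a² ≤ d φ(X)`.

`BN` normalizes each row separately. Under the isometry between the Frobenius norm and the
`ℓ²`-sum of the Euclidean row norms, its derivative is block diagonal, the block of row `x`
being `‖x‖⁻¹` times the orthogonal projection onto `x^⊥`. Hence `‖J_BN(X)‖ ≤ a⁻¹`, and both bounds
follow from elementary estimates of `-log a` in terms of `a² - 1 - log a²`.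
-/

open MeasureTheory Matrix

attribute [local instance] Matrix.frobeniusNormedAddCommGroup Matrix.frobeniusNormedSpace

open Finset

section NormalizeDeriv

variable {F : Type*} [NormedAddCommGroup F] [InnerProductSpace ℝ F]

theorem hasFDerivAt_norm_inv_smul {v : F} (hv : v ≠ 0) :
    HasFDerivAt (fun w : F => ‖w‖⁻¹ • w) (‖v‖⁻¹ • (ℝ ∙ v)ᗮ.starProjection) v := by
  have hv' : ‖v‖ ≠ 0 := norm_ne_zero_iff.mpr hv
  have hnorm := (hasFDerivAt_id v).norm_sq.sqrt (by positivity)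
  simp only [id, Real.sqrt_sq (norm_nonneg _)] at hnorm
  have hinv := (hasDerivAt_inv hv').comp_hasFDerivAt v hnorm
  refine (hinv.smul (hasFDerivAt_id v)).congr_fderiv ?_
  ext w
  simp only [Function.comp_apply, ContinuousLinearMap.comp_id, id_eq, _root_.add_apply,
    _root_.smul_apply, ContinuousLinearMap.id_apply, ContinuousLinearMap.smulRight_apply,
    coe_innerSL_apply, Submodule.starProjection_orthogonal_val,
    Submodule.starProjection_singleton]
  module

theorem norm_inv_smul_starProjection_orthogonal_le (v : F) :
    ‖‖v‖⁻¹ • (ℝ ∙ v)ᗮ.starProjection‖ ≤ ‖v‖⁻¹ := by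
  rw [norm_smul, norm_inv, norm_norm]
  exact mul_le_of_le_one_right (by positivity) (Submodule.starProjection_norm_le _)

end NormalizeDeriv

section PiLpMap

variable {ι : Type*} [Fintype ι] {F G : ι → Type*} [∀ i, NormedAddCommGroup (F i)]
  [∀ i, NormedSpace ℝ (F i)] [∀ i, NormedAddCommGroup (G i)] [∀ i, NormedSpace ℝ (G i)]

noncomputable def piLpMap (D : ∀ i, F i →L[ℝ] G i) : PiLp 2 F →L[ℝ] PiLp 2 G :=
  (PiLp.continuousLinearEquiv 2 ℝ G).symm.toContinuousLinearMap ∘L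
    ContinuousLinearMap.piMap D ∘L (PiLp.continuousLinearEquiv 2 ℝ F).toContinuousLinearMap

theorem hasFDerivAt_piLpMap {f : ∀ i, F i → G i} {D : ∀ i, F i →L[ℝ] G i} {x : PiLp 2 F}
    (hf : ∀ i, HasFDerivAt (f i) (D i) (x i)) :
    HasFDerivAt (fun y : PiLp 2 F => WithLp.toLp 2 fun i => f i (y i)) (piLpMap D) x := by
  rw [← hasFDerivWithinAt_univ, hasFDerivWithinAt_piLp]
  intro i
  rw [hasFDerivWithinAt_univ]
  exact (hf i).comp x (PiLp.hasFDerivAt_apply (𝕜 := ℝ) 2 x i)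

theorem opNorm_piLpMap_le {D : ∀ i, F i →L[ℝ] G i} {C : ℝ} (hC : 0 ≤ C) (hD : ∀ i, ‖D i‖ ≤ C) :
    ‖piLpMap D‖ ≤ C := by
  refine ContinuousLinearMap.opNorm_le_bound _ hC fun x => ?_
  refine le_of_sq_le_sq ?_ (by positivity)
  rw [mul_pow, PiLp.norm_sq_eq_of_L2, PiLp.norm_sq_eq_of_L2, mul_sum]
  gcongr with i
  rw [← mul_pow]
  gcongr
  exact (D i).le_of_opNorm_le (hD i) (x i)

end PiLpMap

section FrobeniusRows

variable {m n : Type*} [Fintype m] [Fintype n]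

def frobeniusRows : Matrix m n ℝ ≃ₗᵢ[ℝ] PiLp 2 (fun _ : m => EuclideanSpace ℝ n) where
  toFun A := WithLp.toLp 2 fun i => WithLp.toLp 2 (A i)
  invFun p := Matrix.of fun i j => p i j
  map_add' _ _ := rfl
  map_smul' _ _ := rfl
  left_inv _ := rfl
  right_inv _ := rfl
  norm_map' _ := rfl

@[simp]
theorem frobeniusRows_apply (A : Matrix m n ℝ) (i : m) (j : n) : frobeniusRows A i j = A i j := rfl

@[simp]
theorem frobeniusRows_symm_apply (p : PiLp 2 (fun _ : m => EuclideanSpace ℝ n)) (i : m) (j : n) :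
    frobeniusRows.symm p i j = p i j := rfl

end FrobeniusRows

theorem abs_det_le_prod_rowNorm {d : ℕ} (X : Matrix (Fin d) (Fin d) ℝ) :
    |X.det| ≤ ∏ i, rowNorm X i := by
  have : Fact (Module.finrank ℝ (EuclideanSpace ℝ (Fin d)) = d) := ⟨by simp⟩
  let b := EuclideanSpace.basisFun (Fin d) ℝ
  have h := b.toBasis.orientation.abs_volumeForm_apply_le fun i => WithLp.toLp 2 (X i)
  rw [Orientation.volumeForm_robust' _ b, Module.Basis.det_apply] at h
  convert h using 2
  · rw [← det_transpose]; congr 1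
  · simp [rowNorm, EuclideanSpace.norm_eq]

theorem norm_frobeniusRows_apply {d : ℕ} (X : Matrix (Fin d) (Fin d) ℝ) (i : Fin d) :
    ‖frobeniusRows X i‖ = rowNorm X i := by
  simp [rowNorm, EuclideanSpace.norm_eq]

theorem BN_eq_frobeniusRows_symm_comp {d : ℕ} :
    BN (d := d) = frobeniusRows.symm ∘
      (fun x : PiLp 2 (fun _ : Fin d => EuclideanSpace ℝ (Fin d)) =>
        WithLp.toLp 2 fun i => ‖x i‖⁻¹ • x i) ∘ frobeniusRows := by
  funext X
  ext i j
  simp [BN, norm_frobeniusRows_apply, div_eq_inv_mul]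

theorem norm_fderiv_BN_apply_le {d : ℕ} {X : Matrix (Fin d) (Fin d) ℝ} {ρ : ℝ} (hρ : 0 < ρ)
    (hX : ∀ i, ρ ≤ rowNorm X i) (E : Matrix (Fin d) (Fin d) ℝ) :
    ‖fderiv ℝ BN X E‖ ≤ ρ⁻¹ * ‖E‖ := by
  let R := frobeniusRows (m := Fin d) (n := Fin d)
  have hρX : ∀ i, ρ ≤ ‖R X i‖ := fun i => (norm_frobeniusRows_apply X i).symm ▸ hX i
  have hrows : ∀ i, R X i ≠ 0 := fun i => norm_pos_iff.mp (hρ.trans_le (hρX i))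
  let P := piLpMap fun i => ‖R X i‖⁻¹ • (ℝ ∙ R X i)ᗮ.starProjection
  have hD : HasFDerivAt (R.symm ∘ _ ∘ R) _ X := R.symm.hasFDerivAt.comp X
    ((hasFDerivAt_piLpMap fun i => hasFDerivAt_norm_inv_smul (hrows i)).comp X R.hasFDerivAt)
  rw [← BN_eq_frobeniusRows_symm_comp] at hD
  have hP : ‖P‖ ≤ ρ⁻¹ := opNorm_piLpMap_le (by positivity) fun i =>
    (norm_inv_smul_starProjection_orthogonal_le _).trans (inv_anti₀ hρ (hρX i))
  calc ‖fderiv ℝ BN X E‖ = ‖P (R E)‖ := by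
        rw [← R.symm.norm_map]
        -- `hD` carries a Frobenius `NormedSpace` instance that agrees with the one in the goal
        -- only up to unfolding, so `rw [hD.fderiv]` fails
        exact congrArg (fun L => ‖L E‖) hD.fderiv
    _ ≤ ρ⁻¹ * ‖E‖ := by
        rw [← R.norm_map E]
        exact P.le_of_opNorm_le hP _

theorem opNorm_fderiv_BN_le {d : ℕ} {X : Matrix (Fin d) (Fin d) ℝ} {ρ : ℝ} (hρ : 0 < ρ)
    (hX : ∀ i, ρ ≤ rowNorm X i) :
    @Norm.norm _ ContinuousLinearMap.hasOpNorm (fderiv ℝ (BN (d := d)) X) ≤ ρ⁻¹ :=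
  ContinuousLinearMap.opNorm_le_bound _ (by positivity) (norm_fderiv_BN_apply_le hρ hX)

theorem log_opNorm_fderiv_BN_le_max {d : ℕ} {X : Matrix (Fin d) (Fin d) ℝ} {ρ : ℝ} (hρ : 0 < ρ)
    (hX : ∀ i, ρ ≤ rowNorm X i) :
    Real.log (@Norm.norm _ ContinuousLinearMap.hasOpNorm (fderiv ℝ (BN (d := d)) X)) ≤
      max 0 (-Real.log ρ) := by
  rcases (ContinuousLinearMap.opNorm_nonneg (fderiv ℝ (BN (d := d)) X)).eq_or_lt with h | h
  · rw [← h, Real.log_zero]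
    exact le_max_left _ _
  · rw [← Real.log_inv]
    exact (Real.log_le_log h (opNorm_fderiv_BN_le hρ hX)).trans (le_max_right _ _)

section GapInequalities

variable {a t : ℝ}

theorem neg_log_le_add_one (ha : 0 < a) (h : a ^ 2 - 1 - Real.log (a ^ 2) ≤ t) :
    -Real.log a ≤ t + 1 := by
  have h2 : Real.log (a ^ 2) = 2 * Real.log a := by simp [Real.log_pow]
  nlinarith [Real.log_le_sub_one_of_pos ha, Real.log_le_sub_one_of_pos (pow_pos ha 2)]

theorem neg_log_le_two_mul_sqrt (ha : 0 < a) (h : a ^ 2 - 1 - Real.log (a ^ 2) ≤ t)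
    (ht : t ≤ 1 / 16) : -Real.log a ≤ 2 * √t := by
  have h2 : Real.log (a ^ 2) = 2 * Real.log a := by simp [Real.log_pow]
  -- `a ^ 2 - 1 - 2 log a - (1 - a) ^ 2 = 2 (a - 1 - log a) ≥ 0`
  have hsq : (1 - a) ^ 2 ≤ t := by nlinarith [Real.log_le_sub_one_of_pos ha]
  have hdist : 1 - a ≤ √t := (le_abs_self _).trans (Real.abs_le_sqrt hsq)
  have hsqrt : √t ≤ 1 / 4 := (Real.sqrt_le_left (by norm_num)).2 (by linarith)
  have hlog : a * -Real.log a ≤ 1 - a := by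
    have := Real.one_sub_inv_le_log_of_pos ha
    have : a * (1 - a⁻¹) = a - 1 := by field_simp
    nlinarith
  nlinarith [Real.sqrt_nonneg t]

end GapInequalities

theorem rowNorm_pos {d : ℕ} {X : Matrix (Fin d) (Fin d) ℝ} (hX : X.det ≠ 0) (i : Fin d) :
    0 < rowNorm X i := by
  refine (Real.sqrt_nonneg _).lt_of_ne' fun h => hX ?_
  have := abs_det_le_prod_rowNorm X
  rwa [prod_eq_zero (mem_univ i) h, abs_nonpos_iff] at this

theorem trace_mul_transpose_eq_sum_rowNorm_sq {d : ℕ} (X : Matrix (Fin d) (Fin d) ℝ) :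
    (X * Xᵀ).trace = ∑ i, rowNorm X i ^ 2 := by
  simp [Matrix.trace, Matrix.mul_apply, rowNorm, sq, Real.mul_self_sqrt, sum_nonneg, mul_self_nonneg]

theorem natCast_mul_isoGap {d : ℕ} (hd : 0 < d) {X : Matrix (Fin d) (Fin d) ℝ}
    (hX : X.det ≠ 0) (htr : (X * Xᵀ).trace = d) :
    d * isoGap X = -Real.log (X.det ^ 2) := by
  have hd' : (d : ℝ) ≠ 0 := by positivity
  rw [isoGap, det_mul, det_transpose, trace_mul_comm, htr, ← sq, one_div_mul_cancel hd', div_one,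
    Real.log_rpow (by positivity)]
  field_simp

theorem sum_rowNorm_sq_sub_one_sub_log_le {d : ℕ} (hd : 0 < d) {X : Matrix (Fin d) (Fin d) ℝ}
    (hX : X.det ≠ 0) (htr : (X * Xᵀ).trace = d) :
    ∑ i, (rowNorm X i ^ 2 - 1 - Real.log (rowNorm X i ^ 2)) ≤ d * isoGap X := by
  have hpos : ∀ i, 0 < rowNorm X i ^ 2 := fun i => pow_pos (rowNorm_pos hX i) 2
  have hhad : X.det ^ 2 ≤ ∏ i, rowNorm X i ^ 2 := by
    rw [← sq_abs, prod_pow]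
    exact pow_le_pow_left₀ (abs_nonneg _) (abs_det_le_prod_rowNorm X) 2
  rw [natCast_mul_isoGap hd hX htr, sum_sub_distrib, sum_sub_distrib,
    ← trace_mul_transpose_eq_sum_rowNorm_sq, htr, ← Real.log_prod fun i _ => (hpos i).ne']
  simpa using Real.log_le_log (by positivity) hhad

/-- for nonsingular `X` with `Tr(XXᵀ) = d`, the Fréchet derivative of `BN`
at `X` (operator norm w.r.t. the Frobenius norm) satisfies
`log ‖J_BN(X)‖ ≤ d·φ(X) + 1`, and if moreover `φ(X) ≤ 1/(16d)` then
`log ‖J_BN(X)‖ ≤ 2√(d·φ(X))`. -/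
theorem log_opNorm_fderiv_BN_le {d : ℕ} (hd : 0 < d)
    (X : Matrix (Fin d) (Fin d) ℝ) (hX : X.det ≠ 0)
    (htr : (X * Xᵀ).trace = (d : ℝ)) :
    Real.log (@Norm.norm _ ContinuousLinearMap.hasOpNorm (fderiv ℝ (BN (d := d)) X)) ≤ d * isoGap X + 1 ∧
      (isoGap X ≤ 1 / (16 * d) →
        Real.log (@Norm.norm _ ContinuousLinearMap.hasOpNorm (fderiv ℝ (BN (d := d)) X)) ≤ 2 * Real.sqrt (d * isoGap X)) := by
  obtain ⟨m, -, hm⟩ := exists_min_image univ (rowNorm X) (univ_nonempty_iff.2 ⟨⟨0, hd⟩⟩)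
  have ha := rowNorm_pos hX m
  have hJ := log_opNorm_fderiv_BN_le_max ha fun i => hm i (mem_univ i)
  have hg : ∀ s : ℝ, 0 < s → 0 ≤ s - 1 - Real.log s := fun s hs => by
    linarith [Real.log_le_sub_one_of_pos hs]
  have hgap : rowNorm X m ^ 2 - 1 - Real.log (rowNorm X m ^ 2) ≤ d * isoGap X :=
    (single_le_sum (fun i _ => hg _ (pow_pos (rowNorm_pos hX i) 2)) (mem_univ m)).trans
      (sum_rowNorm_sq_sub_one_sub_log_le hd hX htr)
  have hgap_nonneg := (hg _ (pow_pos ha 2)).trans hgap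
  refine ⟨hJ.trans (max_le (by linarith) (neg_log_le_add_one ha hgap)), fun hsmall => ?_⟩
  have ht16 : d * isoGap X ≤ 1 / 16 := by
    rw [le_div_iff₀ (by positivity)] at hsmall
    linarith
  exact hJ.trans (max_le (by positivity) (neg_log_le_two_mul_sqrt ha hgap ht16))
end

section
/- Let X ∈ ℝ^{d×d} be nonsingular and let λ_min denote the smallest eigenvalue of XXᵀ. Let J_BN(X) be the Fréchet derivative of the map BN at X, regarded as a linear operator on ℝ^{d×d} with operator norm ‖·‖_op taken with respect to the Frobenius norm. Then ‖J_BN(X)‖_op² ≤ 1/λ_min. -/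
/-!
Row `i` of `BN X` is the radial projection `x ↦ x / ‖x‖` of row `i` of `X`, and in any real inner
product space `‖x‖ ‖y‖ ‖x/‖x‖ - y/‖y‖‖² = 2‖x‖‖y‖ - 2⟪x, y⟫ ≤ ‖x - y‖²`. Summing over rows, `BN` is
`1/r`-Lipschitz at `X` as soon as all rows near `X` have norm at least `r`, so `‖J_BN(X)‖` is at
most the inverse of the smallest row norm of `X`. Finally the squared row norms are the diagonal
entries of `XXᵀ`, which are bounded below by `λ_min > 0`.
-/

open MeasureTheory Matrix

attribute [local instance] Matrix.frobeniusNormedAddCommGroup Matrix.frobeniusNormedSpace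

lemma norm_mul_norm_mul_norm_normalize_sub_normalize_sq_le {F : Type*} [NormedAddCommGroup F]
    [InnerProductSpace ℝ F] (x y : F) :
    ‖x‖ * ‖y‖ * ‖NormedSpace.normalize x - NormedSpace.normalize y‖ ^ 2 ≤ ‖x - y‖ ^ 2 := by
  rcases eq_or_ne x 0 with rfl | hx
  · simp
  rcases eq_or_ne y 0 with rfl | hy
  · simp
  have ha := norm_pos_iff.2 hx
  have hb := norm_pos_iff.2 hy
  have hunit : ‖NormedSpace.normalize x - NormedSpace.normalize y‖ ^ 2 =
      2 - 2 * (inner ℝ x y / (‖x‖ * ‖y‖)) := by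
    rw [norm_sub_sq_real, NormedSpace.norm_normalize hx, NormedSpace.norm_normalize hy,
      NormedSpace.normalize, NormedSpace.normalize, real_inner_smul_left, real_inner_smul_right]
    field_simp
    ring
  rw [hunit, norm_sub_sq_real]
  field_simp
  nlinarith [sq_nonneg (‖x‖ - ‖y‖)]

open scoped MatrixOrder ComplexOrder in
lemma Matrix.IsHermitian.iInf_eigenvalues_le_re_diag {𝕜 n : Type*} [RCLike 𝕜] [Fintype n]
    [DecidableEq n] {A : Matrix n n 𝕜} (hA : A.IsHermitian) (i : n) :
    ⨅ k, hA.eigenvalues k ≤ RCLike.re (A i i) := by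
  have hle : algebraMap ℝ _ (⨅ k, hA.eigenvalues k) ≤ A := by
    refine (algebraMap_le_iff_le_spectrum hA.isSelfAdjoint).2 fun x hx => ?_
    obtain ⟨k, rfl⟩ := hA.spectrum_real_eq_range_eigenvalues ▸ hx
    exact ciInf_le (Finite.bddBelow_range _) k
  have := RCLike.nonneg_iff.1 ((Matrix.le_iff.1 hle).diag_nonneg (i := i))
  simpa [sub_nonneg, Algebra.algebraMap_eq_smul_one, RCLike.smul_re] using this.1

lemma Matrix.frobenius_norm_sq_eq_sum_norm_row_sq {m n α : Type*} [Fintype m] [Fintype n]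
    [NormedAddCommGroup α] (A : Matrix m n α) :
    ‖A‖ ^ 2 = ∑ i, ‖WithLp.toLp 2 (A i)‖ ^ 2 :=
  PiLp.norm_sq_eq_of_L2 _ (WithLp.toLp 2 fun i => WithLp.toLp 2 (A i))

lemma Matrix.norm_row_le_frobenius_norm {m n α : Type*} [Fintype m] [Fintype n]
    [NormedAddCommGroup α] (A : Matrix m n α) (i : m) :
    ‖WithLp.toLp 2 (A i)‖ ≤ ‖A‖ := by
  refine le_of_sq_le_sq ?_ (norm_nonneg _)
  rw [frobenius_norm_sq_eq_sum_norm_row_sq]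
  exact Finset.single_le_sum (f := fun i => ‖WithLp.toLp 2 (A i)‖ ^ 2) (fun _ _ => by positivity)
    (Finset.mem_univ i)

section BN

variable {d : ℕ}

lemma rowNorm_eq_norm (X : Matrix (Fin d) (Fin d) ℝ) (i : Fin d) :
    rowNorm X i = ‖WithLp.toLp 2 (X i)‖ := by
  simp [rowNorm, EuclideanSpace.norm_eq]

lemma toLp_BN_apply (X : Matrix (Fin d) (Fin d) ℝ) (i : Fin d) :
    WithLp.toLp 2 (BN X i) = NormedSpace.normalize (WithLp.toLp 2 (X i)) := by
  ext j
  simp [BN, NormedSpace.normalize, rowNorm_eq_norm, div_eq_inv_mul]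

lemma abs_rowNorm_sub_rowNorm_le (X Y : Matrix (Fin d) (Fin d) ℝ) (i : Fin d) :
    |rowNorm Y i - rowNorm X i| ≤ ‖Y - X‖ := by
  rw [rowNorm_eq_norm, rowNorm_eq_norm]
  exact (abs_norm_sub_norm_le _ _).trans (norm_row_le_frobenius_norm (Y - X) i)

lemma mul_norm_BN_sub_BN_le {X Y : Matrix (Fin d) (Fin d) ℝ} {r : ℝ} (hr : 0 ≤ r)
    (hX : ∀ i, r ≤ rowNorm X i) (hY : ∀ i, r ≤ rowNorm Y i) :
    r * ‖BN Y - BN X‖ ≤ ‖Y - X‖ := by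
  refine le_of_sq_le_sq ?_ (norm_nonneg _)
  rw [mul_pow, frobenius_norm_sq_eq_sum_norm_row_sq, frobenius_norm_sq_eq_sum_norm_row_sq,
    Finset.mul_sum]
  refine Finset.sum_le_sum fun i _ => ?_
  have toLp_row_sub (A B : Matrix (Fin d) (Fin d) ℝ) :
      WithLp.toLp 2 ((A - B) i) = WithLp.toLp 2 (A i) - WithLp.toLp 2 (B i) := rfl
  have hrr : r ^ 2 ≤ rowNorm Y i * rowNorm X i := by
    rw [sq]; exact mul_le_mul (hY i) (hX i) hr (hr.trans (hY i))
  calc r ^ 2 * ‖WithLp.toLp 2 ((BN Y - BN X) i)‖ ^ 2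
      ≤ rowNorm Y i * rowNorm X i * ‖WithLp.toLp 2 ((BN Y - BN X) i)‖ ^ 2 := by gcongr
    _ ≤ ‖WithLp.toLp 2 ((Y - X) i)‖ ^ 2 := by
      rw [toLp_row_sub, toLp_row_sub, toLp_BN_apply, toLp_BN_apply, rowNorm_eq_norm,
        rowNorm_eq_norm]
      exact norm_mul_norm_mul_norm_normalize_sub_normalize_sq_le _ _

lemma norm_fderiv_BN_le {X : Matrix (Fin d) (Fin d) ℝ} {r : ℝ} (hr : 0 < r)
    (hX : ∀ i, r ≤ rowNorm X i) :
    @Norm.norm _ ContinuousLinearMap.hasOpNorm (fderiv ℝ BN X) ≤ r⁻¹ := by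
  refine le_of_forall_gt_imp_ge_of_dense fun C hC => ?_
  have hC0 : 0 < C := (inv_pos.2 hr).trans hC
  have hCr : C⁻¹ < r := (inv_lt_comm₀ hr hC0).1 hC
  refine norm_fderiv_le_of_lip' ℝ hC0.le ?_
  filter_upwards [Metric.ball_mem_nhds X (sub_pos.2 hCr)] with Y hY
  rw [Metric.mem_ball, dist_eq_norm] at hY
  have hYrow (i : Fin d) : C⁻¹ ≤ rowNorm Y i := by
    linarith [(abs_le.1 (abs_rowNorm_sub_rowNorm_le X Y i)).1, hX i]
  have := mul_norm_BN_sub_BN_le (inv_nonneg.2 hC0.le) (fun i => hCr.le.trans (hX i)) hYrow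
  rwa [inv_mul_le_iff₀ hC0] at this

end BN

/-- for nonsingular `X`, the Fréchet derivative of `BN` at `X`
(operator norm w.r.t. the Frobenius norm) satisfies `‖J_BN(X)‖² ≤ 1/λ_min`,
where `λ_min` is the smallest eigenvalue of `XXᵀ`. -/
theorem opNorm_fderiv_BN_sq_le {d : ℕ} (hd : 0 < d)
    (X : Matrix (Fin d) (Fin d) ℝ) (hX : X.det ≠ 0)
    (hsym : (X * Xᵀ).IsHermitian) :
    (@Norm.norm _ ContinuousLinearMap.hasOpNorm (fderiv ℝ (BN (d := d)) X)) ^ 2 ≤ 1 / (⨅ i, hsym.eigenvalues i) := by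
  have : Nonempty (Fin d) := ⟨⟨0, hd⟩⟩
  have hPD : (X * Xᵀ).PosDef := by
    have hinj : Function.Injective X.vecMul :=
      vecMul_injective_iff_isUnit.2 ((isUnit_iff_isUnit_det X).2 hX.isUnit)
    simpa using PosDef.mul_conjTranspose_self X hinj
  have hlam : 0 < ⨅ i, hsym.eigenvalues i := by
    obtain ⟨i, hi⟩ := exists_eq_ciInf_of_finite (f := hsym.eigenvalues)
    exact hi ▸ hPD.eigenvalues_pos i
  set lam := ⨅ i, hsym.eigenvalues i
  have hrow (i : Fin d) : √lam ≤ rowNorm X i := by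
    refine Real.sqrt_le_sqrt ((hsym.iInf_eigenvalues_le_re_diag i).trans_eq ?_)
    simp [Matrix.mul_apply, sq]
  calc _ ≤ (√lam)⁻¹ ^ 2 := by gcongr; exact norm_fderiv_BN_le (Real.sqrt_pos.2 hlam) hrow
    _ = 1 / lam := by rw [inv_pow, Real.sq_sqrt hlam.le, one_div]
end

section
/- Let X ∈ ℝ^{d×d} be nonsingular with Tr(XᵀX) = d, and let λ_d denote the smallest eigenvalue of XᵀX. Then −log λ_d ≤ d·φ(X) + 1. Moreover, if φ(X) ≤ 1/(16d), then −log λ_d ≤ 2·√(d·φ(X)). -/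
open MeasureTheory Matrix

attribute [local instance] Matrix.frobeniusNormedAddCommGroup Matrix.frobeniusNormedSpace

/-!
Write `λ_i` for the eigenvalues of `XᵀX`, so that `d φ(X) = ∑ -log λ_i` and `∑ λ_i = d`.
Since `-log λ ≥ 1 - λ`, discarding all terms `λ_i - 1 - log λ_i ≥ 0` but the one of the
smallest eigenvalue `m` gives `m - 1 - log m ≤ d φ(X)`. Both bounds on `t = -log m` follow
from this: the first because `m > 0`, the second because `e^{-t} ≥ (1 - t/2)²` for `t ≤ 2`,
so `t² / 4 ≤ e^{-t} - 1 + t ≤ d φ(X)`.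
-/

open Real

lemma neg_log_le_two_mul_sqrt_s10 {m s : ℝ} (hm : 0 < m) (hs : s ≤ 1)
    (h : m - 1 - log m ≤ s) : -log m ≤ 2 * √s := by
  set t := -log m
  have hm_eq : exp (-t) = m := by simp [t, exp_log hm]
  have hquad : (t / 2) ^ 2 ≤ s := by
    have := one_sub_div_pow_le_exp_neg (n := 2) (t := t) (by push_cast; linarith)
    rw [hm_eq] at this
    push_cast at this
    nlinarith
  linarith [le_abs_self (t / 2), abs_le_sqrt hquad]

lemma sub_one_sub_log_le_sum_neg_log {ι : Type*} [Fintype ι] {μ : ι → ℝ}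
    (hpos : ∀ j, 0 < μ j) (hsum : ∑ j, μ j = Fintype.card ι) (i : ι) :
    μ i - 1 - log (μ i) ≤ ∑ j, -log (μ j) :=
  calc μ i - 1 - log (μ i) ≤ ∑ j, (μ j - 1 - log (μ j)) :=
        Finset.single_le_sum (f := fun j ↦ μ j - 1 - log (μ j))
          (fun j _ ↦ by linarith [log_le_sub_one_of_pos (hpos j)]) (Finset.mem_univ i)
    _ = ∑ j, -log (μ j) := by simp [Finset.sum_sub_distrib, hsum]

lemma eigenvalues_transpose_mul_self_pos {n : Type*} [Fintype n] [DecidableEq n]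
    {X : Matrix n n ℝ} (hX : X.det ≠ 0) (hsym : (Xᵀ * X).IsHermitian) (i : n) :
    0 < hsym.eigenvalues i := by
  have hinj : Function.Injective X.mulVec :=
    mulVec_injective_iff_isUnit.mpr ((isUnit_iff_isUnit_det X).mpr hX.isUnit)
  have hposDef : (Xᵀ * X).PosDef := by simpa using PosDef.conjTranspose_mul_self X hinj
  exact hposDef.eigenvalues_pos i

lemma mul_isoGap_eq_sum_neg_log_eigenvalues {d : ℕ} (hd : 0 < d) {X : Matrix (Fin d) (Fin d) ℝ}
    (hX : X.det ≠ 0) (htr : (Xᵀ * X).trace = d) (hsym : (Xᵀ * X).IsHermitian) :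
    d * isoGap X = ∑ i, -log (hsym.eigenvalues i) := by
  have hpos := eigenvalues_transpose_mul_self_pos hX hsym
  have hdet : (Xᵀ * X).det = ∏ i, hsym.eigenvalues i := by
    simpa using hsym.det_eq_prod_eigenvalues
  have hd' : (d : ℝ) ≠ 0 := by positivity
  rw [isoGap, htr, one_div_mul_cancel hd', div_one, hdet,
    log_rpow (Finset.prod_pos fun i _ ↦ hpos i), log_prod fun i _ ↦ (hpos i).ne',
    Finset.sum_neg_distrib]
  field_simp

/-- for nonsingular `X` with `Tr(XᵀX) = d` and `λ_d` the smallest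
eigenvalue of `XᵀX`, one has `−log λ_d ≤ d·φ(X) + 1`; moreover if `φ(X) ≤ 1/(16d)`
then `−log λ_d ≤ 2√(d·φ(X))`. -/
theorem neg_log_min_eigenvalue_le {d : ℕ} (hd : 0 < d)
    (X : Matrix (Fin d) (Fin d) ℝ) (hX : X.det ≠ 0)
    (htr : (Xᵀ * X).trace = (d : ℝ))
    (hsym : (Xᵀ * X).IsHermitian) :
    - Real.log (⨅ i, hsym.eigenvalues i) ≤ d * isoGap X + 1 ∧
      (isoGap X ≤ 1 / (16 * d) →
        - Real.log (⨅ i, hsym.eigenvalues i) ≤ 2 * Real.sqrt (d * isoGap X)) := by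
  have : Nonempty (Fin d) := Fin.pos_iff_nonempty.mp hd
  obtain ⟨i, hi⟩ := exists_eq_ciInf_of_finite (f := hsym.eigenvalues)
  have hpos := eigenvalues_transpose_mul_self_pos hX hsym
  have hsum : ∑ j, hsym.eigenvalues j = Fintype.card (Fin d) := by
    simpa [htr] using hsym.trace_eq_sum_eigenvalues.symm
  have hgap : hsym.eigenvalues i - 1 - log (hsym.eigenvalues i) ≤ d * isoGap X := by
    rw [mul_isoGap_eq_sum_neg_log_eigenvalues hd hX htr hsym]
    exact sub_one_sub_log_le_sum_neg_log hpos hsum i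
  rw [← hi]
  refine ⟨by linarith [hpos i], fun hφ ↦ neg_log_le_two_mul_sqrt_s10 (hpos i) ?_ hgap⟩
  calc (d : ℝ) * isoGap X ≤ d * (1 / (16 * d)) := by gcongr
    _ ≤ 1 := by field_simp; norm_num
end

section
/- Let d ≥ 2, let X ∈ ℝ^{d×d} be nonsingular with all rows of unit Euclidean norm, let λ_1, …, λ_d be the eigenvalues of XXᵀ, and let W be Haar-distributed on the orthogonal group O(d). Set X' = WX. Then E[ ( Σ_{j=1}^d ‖X'_{j·}‖ )² ] ≤ d² − Σ_{k=1}^d (λ_k − 1)² / (2(d+2)). -/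
open MeasureTheory Matrix

/-- Matrices inherit the (Borel) product measurable structure of `Fin d → Fin d → ℝ`. -/
instance matrixMeasurableSpace {d : ℕ} : MeasurableSpace (Matrix (Fin d) (Fin d) ℝ) :=
  (inferInstance : MeasurableSpace (Fin d → Fin d → ℝ))

/-- `μ` is the Haar probability measure on the orthogonal group `O(d)`, viewed as a
measure on `d × d` real matrices: it is a probability measure, concentrated on the
orthogonal matrices, and invariant under left and right translation by any orthogonal
matrix (these properties characterize the Haar probability measure uniquely). -/
def IsHaarOrthogonal {d : ℕ} (μ : Measure (Matrix (Fin d) (Fin d) ℝ)) : Prop :=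
  IsProbabilityMeasure μ ∧
  (∀ᵐ W ∂μ, Wᵀ * W = 1) ∧
  ∀ U : Matrix (Fin d) (Fin d) ℝ, Uᵀ * U = 1 →
    μ.map (fun W => U * W) = μ ∧ μ.map (fun W => W * U) = μ

/-!
Write `q_j = ‖X'_{j·}‖²`. Almost surely `∑ q_j = Tr(XXᵀ) = d`, and the elementary bound
`√u √v ≤ (u + v)/2 - (u - v)²/(4d)` for `u + v ≤ d` gives
`(∑ √q_j)² ≤ d² + d/2 - (∑ q_j²)/2`. In an eigenbasis of `XXᵀ`, `q_j` has the law of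
`∑ λ_a W_{ja}²`. A Householder reflection maps any unit vector to any other, so the law of `W u`
does not depend on the unit vector `u`; this gives `E[W_{ja}² W_{jb}²] = (1 + 2 δ_{ab})/(d(d+2))` and
`E[q_j²] = (d² + 2 ∑ λ_a²)/(d(d+2))`. Together: `E[(∑ √q_j)²] ≤ d² - ∑ (λ_k - 1)²/(d + 2)`.
-/

/-- For `v = 0` the junk value `2 / 0 = 0` makes this the identity. -/
noncomputable def householder {n : Type*} [Fintype n] [DecidableEq n] (v : n → ℝ) :
    Matrix n n ℝ :=
  1 - (2 / (v ⬝ᵥ v)) • vecMulVec v v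

section Householder
variable {n : Type*} [Fintype n] [DecidableEq n]

@[simp]
lemma transpose_householder (v : n → ℝ) : (householder v)ᵀ = householder v := by
  simp [householder]

lemma householder_mul_self (v : n → ℝ) : householder v * householder v = 1 := by
  by_cases hv : v ⬝ᵥ v = 0
  · simp [householder, hv]
  · simp only [householder, sub_mul, mul_sub, one_mul, mul_one, Matrix.smul_mul, Matrix.mul_smul,
      vecMulVec_mul_vecMulVec, vecMulVec_smul, smul_smul]
    rw [show 2 / v ⬝ᵥ v * (2 / v ⬝ᵥ v * v ⬝ᵥ v) = 2 * (2 / v ⬝ᵥ v) by field_simp]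
    module

lemma householder_sub_mulVec {u w : n → ℝ} (hu : u ⬝ᵥ u = 1) (hw : w ⬝ᵥ w = 1) :
    householder (u - w) *ᵥ w = u := by
  have hnorm : (u - w) ⬝ᵥ (u - w) = -2 * ((u - w) ⬝ᵥ w) := by
    simp only [sub_dotProduct, dotProduct_sub, hu, hw, dotProduct_comm w u]; ring
  by_cases h : (u - w) ⬝ᵥ w = 0
  · rw [h, mul_zero, dotProduct_self_eq_zero, sub_eq_zero] at hnorm
    simp [householder, hnorm]
  · rw [householder, sub_mulVec, one_mulVec, smul_mulVec, vecMulVec_mulVec, hnorm, op_smul_eq_smul,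
      smul_smul, show 2 / (-2 * (u - w) ⬝ᵥ w) * (u - w) ⬝ᵥ w = -1 by field_simp]
    module
end Householder

instance matrixBorelSpace {d : ℕ} : BorelSpace (Matrix (Fin d) (Fin d) ℝ) :=
  inferInstanceAs (BorelSpace (Fin d → Fin d → ℝ))

section Orthogonal
variable {d : ℕ} {W : Matrix (Fin d) (Fin d) ℝ}

lemma sum_sq_apply_eq_mul_transpose_apply (M : Matrix (Fin d) (Fin d) ℝ) (i : Fin d) :
    ∑ k, M i k ^ 2 = (M * Mᵀ) i i := by
  simp [mul_apply, sq]

lemma sum_sq_apply_eq_one_of_transpose_mul_self (hW : Wᵀ * W = 1) (i : Fin d) :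
    ∑ a, W i a ^ 2 = 1 := by
  rw [sum_sq_apply_eq_mul_transpose_apply, mul_eq_one_comm.mp hW, one_apply_eq]

lemma abs_apply_le_one_of_transpose_mul_self (hW : Wᵀ * W = 1) (i a : Fin d) :
    |W i a| ≤ 1 := by
  rw [← sq_le_one_iff_abs_le_one, ← sum_sq_apply_eq_one_of_transpose_mul_self hW i]
  exact Finset.single_le_sum (fun b _ => sq_nonneg (W i b)) (Finset.mem_univ a)

lemma isCompact_setOf_transpose_mul_self_eq_one :
    IsCompact {W : Matrix (Fin d) (Fin d) ℝ | Wᵀ * W = 1} := by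
  refine IsCompact.of_isClosed_subset
    (isCompact_univ_pi fun _ => isCompact_univ_pi fun _ => isCompact_Icc (a := -1) (b := 1))
    (isClosed_eq (by fun_prop) continuous_const) fun W hW i _ a _ => ?_
  exact abs_le.mp (abs_apply_le_one_of_transpose_mul_self hW i a)

end Orthogonal

namespace IsHaarOrthogonal
variable {d : ℕ} {μ : Measure (Matrix (Fin d) (Fin d) ℝ)}

lemma integrable_of_continuous (hμ : IsHaarOrthogonal μ)
    {f : Matrix (Fin d) (Fin d) ℝ → ℝ} (hf : Continuous f) : Integrable f μ := by
  have := hμ.1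
  obtain ⟨C, hC⟩ :=
    isCompact_setOf_transpose_mul_self_eq_one.exists_bound_of_continuousOn hf.continuousOn
  exact .of_bound hf.aestronglyMeasurable C (hμ.2.1.mono hC)

lemma integral_comp_mul_right (hμ : IsHaarOrthogonal μ) {V : Matrix (Fin d) (Fin d) ℝ}
    (hV : Vᵀ * V = 1) {f : Matrix (Fin d) (Fin d) ℝ → ℝ} (hf : AEStronglyMeasurable f μ) :
    ∫ W, f (W * V) ∂μ = ∫ W, f W ∂μ := by
  have hmap := (hμ.2.2 V hV).2
  rw [← integral_map (by fun_prop) (by rwa [hmap]), hmap]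

lemma integral_comp_mulVec (hμ : IsHaarOrthogonal μ) {f : (Fin d → ℝ) → ℝ} (hf : Continuous f)
    {u w : Fin d → ℝ} (hu : u ⬝ᵥ u = 1) (hw : w ⬝ᵥ w = 1) :
    ∫ W, f (W *ᵥ u) ∂μ = ∫ W, f (W *ᵥ w) ∂μ := by
  have hH : (householder (u - w))ᵀ * householder (u - w) = 1 := by
    rw [transpose_householder, householder_mul_self]
  simpa only [← mulVec_mulVec, householder_sub_mulVec hu hw] using
    hμ.integral_comp_mul_right hH (f := fun W => f (W *ᵥ w)) (by fun_prop)


lemma integral_apply_pow_eq (hμ : IsHaarOrthogonal μ) (n : ℕ) (i a b : Fin d) :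
    ∫ W, W i a ^ n ∂μ = ∫ W, W i b ^ n ∂μ := by
  simpa using hμ.integral_comp_mulVec (f := fun x => x i ^ n) (by fun_prop)
    (u := Pi.single a 1) (w := Pi.single b 1) (by simp) (by simp)

lemma integral_apply_sq (hμ : IsHaarOrthogonal μ) (i a : Fin d) :
    ∫ W, W i a ^ 2 ∂μ = 1 / d := by
  have := hμ.1
  have hsum : ∑ b, ∫ W, W i b ^ 2 ∂μ = 1 := by
    rw [← integral_finsetSum _ fun b _ => hμ.integrable_of_continuous (by fun_prop),
      integral_congr_ae (hμ.2.1.mono fun W hW => sum_sq_apply_eq_one_of_transpose_mul_self hW i)]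
    simp
  simp only [hμ.integral_apply_pow_eq 2 i _ a, Finset.sum_const, Finset.card_univ,
    Fintype.card_fin, nsmul_eq_mul] at hsum
  have hd : (d : ℝ) ≠ 0 := Nat.cast_ne_zero.mpr (Fin.pos a).ne'
  field_simp
  linarith

lemma integral_apply_sq_mul_apply_sq_of_ne (hμ : IsHaarOrthogonal μ) {i a b : Fin d}
    (hab : a ≠ b) : ∫ W, W i a ^ 2 * W i b ^ 2 ∂μ = (∫ W, W i a ^ 4 ∂μ) / 3 := by
  -- rotate by `±45°` in the `(a, b)`-plane: `(x + y)⁴ + (x - y)⁴ = 2x⁴ + 12x²y² + 2y⁴`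
  set c : ℝ := √2⁻¹
  have hc : c ^ 2 = 2⁻¹ := Real.sq_sqrt (by norm_num)
  have hrot (s : ℝ) (hs : s ^ 2 = 1) :
      ∫ W, (c * (W i a + s * W i b)) ^ 4 ∂μ = ∫ W, W i a ^ 4 ∂μ := by
    set u : Fin d → ℝ := c • (Pi.single a 1 + s • Pi.single b 1)
    have hu : u ⬝ᵥ u = 1 := by
      simp only [u, smul_add, dotProduct_add, dotProduct_smul, dotProduct_single, Pi.add_apply,
        Pi.smul_apply, Pi.single_eq_same, Pi.single_eq_of_ne hab, Pi.single_eq_of_ne hab.symm,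
        smul_eq_mul, mul_one, mul_zero, add_zero, zero_add]
      linear_combination (1 + s ^ 2) * hc + hs / 2
    simpa [u, mulVec_add, mulVec_smul, mul_add] using
      hμ.integral_comp_mulVec (f := fun x => x i ^ 4) (by fun_prop) hu (w := Pi.single a 1)
        (by simp)
  have hpt (W : Matrix (Fin d) (Fin d) ℝ) : W i a ^ 2 * W i b ^ 2 =
      ((c * (W i a + 1 * W i b)) ^ 4 + (c * (W i a + -1 * W i b)) ^ 4
        - W i a ^ 4 / 2 - W i b ^ 4 / 2) / 3 := by
    linear_combination (-(c ^ 2 + 1 / 2) * ((W i a + W i b) ^ 4 + (W i a - W i b) ^ 4) / 3) * hc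
  have hint {f : Matrix (Fin d) (Fin d) ℝ → ℝ} (hf : Continuous f) : Integrable f μ :=
    hμ.integrable_of_continuous hf
  rw [integral_congr_ae (.of_forall hpt), integral_div, integral_sub, integral_sub, integral_add,
    integral_div, integral_div, hrot 1 (by norm_num), hrot (-1) (by norm_num),
    hμ.integral_apply_pow_eq 4 i b a]
  · ring
  all_goals apply hint; fun_prop

lemma integral_apply_sq_mul_apply_sq (hμ : IsHaarOrthogonal μ) (i a b : Fin d) :
    ∫ W, W i a ^ 2 * W i b ^ 2 ∂μ = (1 + if a = b then 2 else 0) / (d * (d + 2)) := by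
  have := hμ.1
  have hdiag : ∫ W, W i a ^ 2 * W i a ^ 2 ∂μ = ∫ W, W i a ^ 4 ∂μ := by ring_nf
  have hrow : ∑ b, ∫ W, W i a ^ 2 * W i b ^ 2 ∂μ = 1 / d := by
    rw [← integral_finsetSum _ fun b _ => hμ.integrable_of_continuous (by fun_prop),
      ← hμ.integral_apply_sq i a]
    refine integral_congr_ae (hμ.2.1.mono fun W hW => ?_)
    beta_reduce
    rw [← Finset.mul_sum, sum_sq_apply_eq_one_of_transpose_mul_self hW, mul_one]
  rw [← Finset.add_sum_erase _ _ (Finset.mem_univ a), hdiag,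
    Finset.sum_congr rfl fun b hb =>
      hμ.integral_apply_sq_mul_apply_sq_of_ne (Finset.ne_of_mem_erase hb).symm,
    Finset.sum_const, Finset.card_erase_of_mem (Finset.mem_univ a), Finset.card_univ,
    Fintype.card_fin, nsmul_eq_mul, Nat.cast_pred (Fin.pos a)] at hrow
  have hd : (d : ℝ) ≠ 0 := Nat.cast_ne_zero.mpr (Fin.pos a).ne'
  have h4 : ∫ W, W i a ^ 4 ∂μ = 3 / (d * (d + 2)) := by
    field_simp at hrow ⊢
    linarith
  split_ifs with hab
  · subst hab
    rw [hdiag, h4]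
    ring
  · rw [hμ.integral_apply_sq_mul_apply_sq_of_ne hab, h4]
    ring

lemma integral_sum_mul_apply_sq_sq (hμ : IsHaarOrthogonal μ) (i : Fin d) (l : Fin d → ℝ) :
    ∫ W, (∑ a, l a * W i a ^ 2) ^ 2 ∂μ =
      ((∑ a, l a) ^ 2 + 2 * ∑ a, l a ^ 2) / (d * (d + 2)) := by
  have hint (a b : Fin d) : Integrable (fun W => l a * W i a ^ 2 * (l b * W i b ^ 2)) μ :=
    hμ.integrable_of_continuous (by fun_prop)
  simp_rw [sq (∑ a, _), Finset.sum_mul_sum]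
  rw [integral_finsetSum _ fun a _ => integrable_finsetSum _ fun b _ => hint a b]
  have hterm (a b : Fin d) : ∫ W, l a * W i a ^ 2 * (l b * W i b ^ 2) ∂μ =
      l a * l b * (1 + if a = b then 2 else 0) / (d * (d + 2)) := by
    rw [mul_div_assoc, ← hμ.integral_apply_sq_mul_apply_sq i, ← integral_const_mul]
    congr 1 with W
    ring
  simp only [integral_finsetSum _ fun b _ => hint _ b, hterm, ← Finset.sum_div, mul_add, mul_one,
    mul_ite, mul_zero, Finset.sum_add_distrib, Finset.sum_ite_eq, Finset.mem_univ, if_true]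
  rw [Finset.mul_sum]
  congr 2
  exact Finset.sum_congr rfl fun a _ => by ring

end IsHaarOrthogonal

lemma two_mul_mul_sqrt_mul_sqrt_le {u v D : ℝ} (hu : 0 ≤ u) (hv : 0 ≤ v) (huv : u + v ≤ D) :
    2 * D * (√u * √v) ≤ D * (u + v) - (u - v) ^ 2 / 2 := by
  obtain ⟨a, ha, rfl⟩ : ∃ a, 0 ≤ a ∧ a ^ 2 = u := ⟨√u, Real.sqrt_nonneg u, Real.sq_sqrt hu⟩
  obtain ⟨b, hb, rfl⟩ : ∃ b, 0 ≤ b ∧ b ^ 2 = v := ⟨√v, Real.sqrt_nonneg v, Real.sq_sqrt hv⟩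
  rw [Real.sqrt_sq ha, Real.sqrt_sq hb]
  -- `(a² - b²)² = (a - b)² (a + b)² ≤ 2 (a² + b²) (a - b)²`
  nlinarith [sq_nonneg (a - b), mul_nonneg (sq_nonneg (a - b)) (sq_nonneg (a - b)),
    mul_nonneg (sq_nonneg (a - b)) (sub_nonneg.mpr huv)]

lemma two_mul_sum_mul_sq_sum_sqrt_add_le {ι : Type*} [Fintype ι] {q : ι → ℝ}
    (hq : ∀ i, 0 ≤ q i) :
    2 * (∑ i, q i) * (∑ i, √(q i)) ^ 2 + Fintype.card ι * ∑ i, q i ^ 2 ≤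
      (2 * Fintype.card ι + 1) * (∑ i, q i) ^ 2 := by
  set D := ∑ i, q i
  have hpair (i j : ι) :
      2 * D * (√(q i) * √(q j)) ≤ D * (q i + q j) - (q i - q j) ^ 2 / 2 := by
    rcases eq_or_ne i j with rfl | hij
    · rw [Real.mul_self_sqrt (hq i)]
      linarith
    · classical
      refine two_mul_mul_sqrt_mul_sqrt_le (hq i) (hq j) ?_
      rw [← Finset.sum_pair hij]
      exact Finset.sum_le_univ_sum_of_nonneg hq
  have hexpand (i j : ι) : D * (q i + q j) - (q i - q j) ^ 2 / 2 =
      D * q i + D * q j - q i ^ 2 / 2 - q j ^ 2 / 2 + q i * q j := by ring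
  calc 2 * D * (∑ i, √(q i)) ^ 2 + Fintype.card ι * ∑ i, q i ^ 2
      = ∑ i, ∑ j, 2 * D * (√(q i) * √(q j)) + Fintype.card ι * ∑ i, q i ^ 2 := by
        rw [sq, Finset.sum_mul_sum, Finset.mul_sum]
        simp only [Finset.mul_sum]
    _ ≤ ∑ i, ∑ j, (D * (q i + q j) - (q i - q j) ^ 2 / 2) + Fintype.card ι * ∑ i, q i ^ 2 := by
        gcongr with i _ j _
        exact hpair i j
    _ = (2 * Fintype.card ι + 1) * D ^ 2 := by
        simp only [hexpand, Finset.sum_add_distrib, Finset.sum_sub_distrib, Finset.sum_const,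
          Finset.card_univ, nsmul_eq_mul, ← Finset.mul_sum, ← Finset.sum_mul, ← Finset.sum_div]
        ring

section Spectral
variable {n : Type*} [Fintype n] [DecidableEq n] {A : Matrix n n ℝ}

lemma Matrix.IsHermitian.eigenvectorUnitary_mul_transpose (hA : A.IsHermitian) :
    (hA.eigenvectorUnitary : Matrix n n ℝ) * (hA.eigenvectorUnitary : Matrix n n ℝ)ᵀ = 1 := by
  simpa only [star_eq_conjTranspose, conjTranspose_eq_transpose_of_trivial] using
    Unitary.mul_star_self_of_mem hA.eigenvectorUnitary.2

lemma Matrix.IsHermitian.transpose_eigenvectorUnitary_mul_mul (hA : A.IsHermitian) :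
    (hA.eigenvectorUnitary : Matrix n n ℝ)ᵀ * A * hA.eigenvectorUnitary =
      diagonal hA.eigenvalues := by
  simpa [Unitary.conjStarAlgAut_star_apply, star_eq_conjTranspose] using
    hA.conjStarAlgAut_star_eigenvectorUnitary

end Spectral

section RowNorms
variable {d : ℕ}

lemma rowNorm_eq_sqrt (M : Matrix (Fin d) (Fin d) ℝ) (j : Fin d) :
    rowNorm M j = √((M * Mᵀ) j j) := by
  rw [rowNorm, sum_sq_apply_eq_mul_transpose_apply]

lemma mul_mul_transpose_mul (W X : Matrix (Fin d) (Fin d) ℝ) :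
    W * X * (W * X)ᵀ = W * (X * Xᵀ) * Wᵀ := by
  simp only [transpose_mul, Matrix.mul_assoc]

lemma trace_mul_mul_transpose_of_transpose_mul_self {W : Matrix (Fin d) (Fin d) ℝ}
    (hW : Wᵀ * W = 1) (A : Matrix (Fin d) (Fin d) ℝ) : (W * A * Wᵀ).trace = A.trace := by
  rw [trace_mul_cycle, hW, Matrix.one_mul]

lemma mul_diagonal_mul_transpose_apply_self (W : Matrix (Fin d) (Fin d) ℝ) (l : Fin d → ℝ)
    (j : Fin d) : (W * diagonal l * Wᵀ) j j = ∑ a, l a * W j a ^ 2 := by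
  rw [mul_apply]
  simp only [mul_diagonal, transpose_apply]
  exact Finset.sum_congr rfl fun a _ => by ring

lemma sq_sum_rowNorm_le {M : Matrix (Fin d) (Fin d) ℝ} (hd : 0 < d) (hM : (M * Mᵀ).trace = d) :
    (∑ j, rowNorm M j) ^ 2 ≤ d ^ 2 + d / 2 - (∑ j, (M * Mᵀ) j j ^ 2) / 2 := by
  have hdiag (j : Fin d) : 0 ≤ (M * Mᵀ) j j := by
    rw [← sum_sq_apply_eq_mul_transpose_apply]; positivity
  have key := two_mul_sum_mul_sq_sum_sqrt_add_le hdiag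
  rw [show ∑ j, (M * Mᵀ) j j = d from hM, Fintype.card_fin] at key
  simp only [rowNorm_eq_sqrt]
  have hd' : (0 : ℝ) < d := Nat.cast_pos.mpr hd
  rw [← sub_nonneg] at key ⊢
  field_simp at key ⊢
  nlinarith

end RowNorms

namespace IsHaarOrthogonal
variable {d : ℕ} {μ : Measure (Matrix (Fin d) (Fin d) ℝ)}

lemma integral_mul_mul_transpose_apply_sq (hμ : IsHaarOrthogonal μ)
    {A U : Matrix (Fin d) (Fin d) ℝ} {l : Fin d → ℝ} (hU : U * Uᵀ = 1)
    (hAU : Uᵀ * A * U = diagonal l) (j : Fin d) :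
    ∫ W, (W * A * Wᵀ) j j ^ 2 ∂μ = ((∑ a, l a) ^ 2 + 2 * ∑ a, l a ^ 2) / (d * (d + 2)) := by
  have hconj (W : Matrix (Fin d) (Fin d) ℝ) :
      W * Uᵀ * A * (W * Uᵀ)ᵀ = W * diagonal l * Wᵀ := by
    rw [← hAU, transpose_mul, transpose_transpose]
    simp only [Matrix.mul_assoc]
  rw [← hμ.integral_comp_mul_right (by rwa [transpose_transpose])
    (Continuous.aestronglyMeasurable (by fun_prop))]
  simp only [hconj, mul_diagonal_mul_transpose_apply_self]
  exact hμ.integral_sum_mul_apply_sq_sq j l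

lemma integral_sq_sum_rowNorm_mul_le (hμ : IsHaarOrthogonal μ) (hd : 0 < d)
    {X : Matrix (Fin d) (Fin d) ℝ} (hX : (X * Xᵀ).trace = d) :
    ∫ W, (∑ j, rowNorm (W * X) j) ^ 2 ∂μ ≤
      d ^ 2 + d / 2 - (∑ j, ∫ W, (W * (X * Xᵀ) * Wᵀ) j j ^ 2 ∂μ) / 2 := by
  have := hμ.1
  have hint {f : Matrix (Fin d) (Fin d) ℝ → ℝ} (hf : Continuous f) : Integrable f μ :=
    hμ.integrable_of_continuous hf
  have hpointwise : ∀ᵐ W ∂μ, (∑ j, rowNorm (W * X) j) ^ 2 ≤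
      d ^ 2 + d / 2 - (∑ j, (W * (X * Xᵀ) * Wᵀ) j j ^ 2) / 2 := by
    filter_upwards [hμ.2.1] with W hW
    rw [← mul_mul_transpose_mul]
    refine sq_sum_rowNorm_le hd ?_
    rw [mul_mul_transpose_mul, trace_mul_mul_transpose_of_transpose_mul_self hW, hX]
  refine (integral_mono_ae (hint (by simp only [rowNorm]; fun_prop)) (hint (by fun_prop))
    hpointwise).trans_eq ?_
  rw [integral_sub (integrable_const _) (hint (by fun_prop)), integral_const, integral_div,
    integral_finsetSum _ fun j _ => hint (by fun_prop), probReal_univ, one_smul]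

end IsHaarOrthogonal

theorem expected_sum_rowNorm_sq_le_general {d : ℕ} (hd : 2 ≤ d)
    (X : Matrix (Fin d) (Fin d) ℝ)
    (hrows : ∀ i, ∑ j, X i j ^ 2 = 1)
    (hsym : (X * Xᵀ).IsHermitian)
    (μ : Measure (Matrix (Fin d) (Fin d) ℝ)) (hμ : IsHaarOrthogonal μ) :
    (∫ W, (∑ j, rowNorm (W * X) j) ^ 2 ∂μ) ≤
      (d : ℝ) ^ 2 - (∑ k, (hsym.eigenvalues k - 1) ^ 2) / (2 * ((d : ℝ) + 2)) := by
  have htrace : (X * Xᵀ).trace = d := by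
    simp [trace, ← sum_sq_apply_eq_mul_transpose_apply, hrows]
  have hsum : ∑ k, hsym.eigenvalues k = d := by
    simpa [htrace] using hsym.trace_eq_sum_eigenvalues.symm
  have hmoment (j : Fin d) := hμ.integral_mul_mul_transpose_apply_sq
    hsym.eigenvectorUnitary_mul_transpose hsym.transpose_eigenvectorUnitary_mul_mul j
  have hd' : (0 : ℝ) < d := by positivity
  calc ∫ W, (∑ j, rowNorm (W * X) j) ^ 2 ∂μ
      ≤ d ^ 2 + d / 2 - (∑ j, ∫ W, (W * (X * Xᵀ) * Wᵀ) j j ^ 2 ∂μ) / 2 :=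
        hμ.integral_sq_sum_rowNorm_mul_le (by omega) htrace
    _ = d ^ 2 - (∑ k, (hsym.eigenvalues k - 1) ^ 2) / (d + 2) := by
        simp only [hmoment, hsum, Finset.sum_const, Finset.card_univ, Fintype.card_fin,
          nsmul_eq_mul, sub_sq, mul_one, one_pow, Finset.sum_add_distrib, Finset.sum_sub_distrib,
          ← Finset.mul_sum]
        field_simp
        ring
    _ ≤ d ^ 2 - (∑ k, (hsym.eigenvalues k - 1) ^ 2) / (2 * (d + 2)) := by
        gcongr
        linarith

/-- for nonsingular `X` with unit-norm rows, eigenvalues `λ` of `XXᵀ`,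
`W` Haar on `O(d)` and `X' = WX`,
`E[(Σ_j ‖X'_{j·}‖)²] ≤ d² − Σ_k (λ_k − 1)²/(2(d+2))`. -/
theorem expected_sum_rowNorm_sq_le {d : ℕ} (hd : 2 ≤ d)
    (X : Matrix (Fin d) (Fin d) ℝ) (hX : X.det ≠ 0)
    (hrows : ∀ i, ∑ j, X i j ^ 2 = 1)
    (hsym : (X * Xᵀ).IsHermitian)
    (μ : Measure (Matrix (Fin d) (Fin d) ℝ)) (hμ : IsHaarOrthogonal μ) :
    (∫ W, (∑ j, rowNorm (W * X) j) ^ 2 ∂μ) ≤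
      (d : ℝ) ^ 2 - (∑ k, (hsym.eigenvalues k - 1) ^ 2) / (2 * ((d : ℝ) + 2)) :=
  expected_sum_rowNorm_sq_le_general hd X hrows hsym μ hμ
end
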